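/- In a one-one-LQ instance where the number of LQ resources q exceeds the size s of a stable matching (q > s), the instance admits no feasible envy-free matching. -/

import Mathlib

/-- `BetterThan pref acc o` : a fixed alternative is strictly preferred over the optional
current partner `o`. Being unmatched (`none`, i.e. ⊥) is least preferred, so any
acceptable alternative (`acc`) beats it; against `some x` we use `pref x`. -/
def BetterThan {α : Type*} (pref : α → Prop) (acc : Prop) : Option α → Prop
  | none => acc
  | some x => pref x

/-- A one-to-one matching between agents `A` and resources `B`, given by mutually
consistent partial partner maps. -/
structure Matching (A B : Type*) where
  mA : A → Option B
  mB : B → Option A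
  consistent : ∀ a b, mA a = some b ↔ mB b = some a

/-- The matching only uses mutually acceptable pairs (edges of the instance). -/
def Matching.RespectsE {A B : Type*} (E : A → B → Prop) (M : Matching A B) : Prop :=
  ∀ a b, M.mA a = some b → E a b

/-- Number of matched agents, i.e. the size of the matching. -/
noncomputable def Matching.size {A B : Type*} (M : Matching A B) : ℕ :=
  Nat.card {a : A // (M.mA a).isSome}

/-- `(a,b)` is a blocking pair for `M`: an acceptable pair not in `M` where both sides
strictly prefer each other over their current assignment. -/
def Blocking {A B : Type*} (E : A → B → Prop) (prefA : A → B → B → Prop)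
    (prefB : B → A → A → Prop) (M : Matching A B) (a : A) (b : B) : Prop :=
  E a b ∧ M.mA a ≠ some b ∧
    BetterThan (prefA a b) (E a b) (M.mA a) ∧ BetterThan (prefB b a) (E a b) (M.mB b)

/-- Stability: no blocking pair. -/
def Stable {A B : Type*} (E : A → B → Prop) (prefA : A → B → B → Prop)
    (prefB : B → A → A → Prop) (M : Matching A B) : Prop :=
  ∀ a b, ¬ Blocking E prefA prefB M a b

/-- Agent `a` has justified envy towards agent `a'`, matched to some resource `b`. -/
def Envies {A B : Type*} (E : A → B → Prop) (prefA : A → B → B → Prop)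
    (prefB : B → A → A → Prop) (M : Matching A B) (a a' : A) : Prop :=
  ∃ b, M.mA a' = some b ∧ E a b ∧ BetterThan (prefA a b) (E a b) (M.mA a) ∧ prefB b a a'

/-- Envy-freeness: no envy pair. -/
def EnvyFree {A B : Type*} (E : A → B → Prop) (prefA : A → B → B → Prop)
    (prefB : B → A → A → Prop) (M : Matching A B) : Prop :=
  ∀ a a', ¬ Envies E prefA prefB M a a'

/-- Feasibility: every lower-quota resource is matched. -/
def Feasible {A B : Type*} (lq : B → Prop) (M : Matching A B) : Prop :=
  ∀ b, lq b → (M.mB b).isSome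

/-- Relaxed stability: every agent participating in a blocking pair is matched,
and matched to a lower-quota resource. -/
def RelaxedStable {A B : Type*} (E : A → B → Prop) (prefA : A → B → B → Prop)
    (prefB : B → A → A → Prop) (lq : B → Prop) (M : Matching A B) : Prop :=
  ∀ a b, Blocking E prefA prefB M a b → ∃ b', M.mA a = some b' ∧ lq b'

/-- Strict preference lists: each vertex has an irreflexive, transitive, total order
over its neighbours, and preferences are only over neighbours. -/
structure StrictPrefs {A B : Type*} (E : A → B → Prop) (prefA : A → B → B → Prop)
    (prefB : B → A → A → Prop) : Prop where
  irreflA : ∀ a b, ¬ prefA a b b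
  transA : ∀ a b₁ b₂ b₃, prefA a b₁ b₂ → prefA a b₂ b₃ → prefA a b₁ b₃
  totalA : ∀ a b b', E a b → E a b' → b ≠ b' → prefA a b b' ∨ prefA a b' b
  memA : ∀ a b b', prefA a b b' → E a b ∧ E a b'
  irreflB : ∀ b a, ¬ prefB b a a
  transB : ∀ b a₁ a₂ a₃, prefB b a₁ a₂ → prefB b a₂ a₃ → prefB b a₁ a₃
  totalB : ∀ b a a', E a b → E a' b → a ≠ a' → prefB b a a' ∨ prefB b a' a
  memB : ∀ b a a', prefB b a a' → E a b ∧ E a' b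


/-! Suppose `M` is envy-free and some agent `a` is matched in `M` but not in the stable matching
`Ms`. Call an agent *improving* if it strictly prefers its `M`-partner to its `Ms`-partner.
Stability of `Ms` and envy-freeness of `M` show that the `Ms`-partner of the `M`-partner of an
improving agent is again improving. This is an injective self-map of the finite set of improving
agents that misses `a`, which is impossible. So every agent matched in `M` is matched in `Ms`,
and a feasible `M` matches at least as many agents as there are lower-quota resources. -/

theorem exists_eq_some_of_not_betterThan {α : Type*} {pref : α → Prop} {acc : Prop}
    {o : Option α} (hacc : acc) (h : ¬ BetterThan pref acc o) :
    ∃ x, o = some x ∧ ¬ pref x := by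
  cases o with
  | none => exact absurd hacc h
  | some x => exact ⟨x, rfl, h⟩

namespace Matching

variable {A B : Type*}

theorem mB_eq_some_of_mA_eq_some (M : Matching A B) {a : A} {b : B} (h : M.mA a = some b) :
    M.mB b = some a :=
  (M.consistent a b).mp h

theorem eq_of_mA_eq_some (M : Matching A B) {a a' : A} {b : B} (h : M.mA a = some b)
    (h' : M.mA a' = some b) : a = a' :=
  Option.some_injective _ <|
    (M.mB_eq_some_of_mA_eq_some h).symm.trans (M.mB_eq_some_of_mA_eq_some h')

theorem card_lq_le_size [Finite A] {lq : B → Prop} (M : Matching A B) (hM : Feasible lq M) :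
    Nat.card {b : B // lq b} ≤ M.size := by
  have hpartner : ∀ b : {b : B // lq b}, M.mA ((M.mB b).get (hM b b.2)) = some b.1 := fun b =>
    (M.consistent _ _).mpr (Option.some_get _).symm
  refine Nat.card_le_card_of_injective
    (fun b => ⟨(M.mB b).get (hM b b.2), by rw [hpartner b]; rfl⟩) fun b b' hbb' => ?_
  have hval : (M.mB b).get (hM b b.2) = (M.mB b').get (hM b' b'.2) := congrArg Subtype.val hbb'
  have h := hpartner b
  rw [hval, hpartner b'] at h
  exact Subtype.ext (Option.some_injective _ h).symm

theorem size_le_size [Finite A] {M M' : Matching A B}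
    (h : ∀ a, (M.mA a).isSome → (M'.mA a).isSome) : M.size ≤ M'.size :=
  Nat.card_le_card_of_injective (fun a => ⟨a.1, h a.1 a.2⟩) fun _ _ hval =>
    Subtype.ext (by simpa using hval)

end Matching

section EnvyFree

variable {A B : Type*} {E : A → B → Prop} {prefA : A → B → B → Prop}
  {prefB : B → A → A → Prop} {Ms M : Matching A B}

def Improves (E : A → B → Prop) (prefA : A → B → B → Prop) (Ms M : Matching A B) (a : A) :
    Prop :=
  ∃ b, M.mA a = some b ∧ BetterThan (prefA a b) (E a b) (Ms.mA a)

theorem exists_improves_mA_eq (hsp : StrictPrefs E prefA prefB) (hMs : Ms.RespectsE E)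
    (hstable : Stable E prefA prefB Ms) (hM : M.RespectsE E) (henvy : EnvyFree E prefA prefB M)
    {x : A} (hx : Improves E prefA Ms M x) :
    ∃ y, Improves E prefA Ms M y ∧ Ms.mA y = M.mA x := by
  obtain ⟨b, hxb, hbetter⟩ := hx
  have hExb : E x b := hM x b hxb
  have hne : Ms.mA x ≠ some b := by
    intro h
    rw [h] at hbetter
    exact hsp.irreflA x b hbetter
  -- `(x, b)` does not block `Ms`, so `b` holds a partner `y` it prefers to `x`.
  obtain ⟨y, hby, hnot⟩ := exists_eq_some_of_not_betterThan hExb fun h =>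
    hstable x b ⟨hExb, hne, hbetter, h⟩
  have hyb : Ms.mA y = some b := (Ms.consistent y b).mpr hby
  have hEyb : E y b := hMs y b hyb
  have hyx : y ≠ x := by rintro rfl; exact hne hyb
  have hpref : prefB b y x := (hsp.totalB b x y hExb hEyb hyx.symm).resolve_left hnot
  -- `y` does not envy `x` in `M`, so `y` prefers its own `M`-partner `b'` to `b`.
  obtain ⟨b', hyb', hnot'⟩ := exists_eq_some_of_not_betterThan hEyb fun h =>
    henvy y x ⟨b, hxb, hEyb, h, hpref⟩
  have hbb' : b ≠ b' := by rintro rfl; exact hyx (M.eq_of_mA_eq_some hyb' hxb)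
  have hpref' : prefA y b' b :=
    (hsp.totalA y b b' hEyb (hM y b' hyb') hbb').resolve_left hnot'
  exact ⟨y, ⟨b', hyb', by rw [hyb]; exact hpref'⟩, hyb.trans hxb.symm⟩

theorem isSome_mA_of_envyFree [Finite A] (hsp : StrictPrefs E prefA prefB)
    (hMs : Ms.RespectsE E) (hstable : Stable E prefA prefB Ms) (hM : M.RespectsE E)
    (henvy : EnvyFree E prefA prefB M) {a : A} (ha : (M.mA a).isSome) : (Ms.mA a).isSome := by
  by_contra hnone
  rw [Option.not_isSome_iff_eq_none] at hnone
  obtain ⟨b, hab⟩ := Option.isSome_iff_exists.mp ha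
  choose f hf hfM using fun x : {x // Improves E prefA Ms M x} =>
    exists_improves_mA_eq hsp hMs hstable hM henvy x.2
  let next : {x // Improves E prefA Ms M x} → {x // Improves E prefA Ms M x} :=
    fun x => ⟨f x, hf x⟩
  have hinj : Function.Injective next := fun x x' h => by
    obtain ⟨c, hxc, -⟩ := x.2
    have hff : f x = f x' := congrArg Subtype.val h
    have hx'c : M.mA x' = some c := by
      rw [← hfM x', ← hff]
      exact (hfM x).trans hxc
    exact Subtype.ext (M.eq_of_mA_eq_some hxc hx'c)
  have ha' : Improves E prefA Ms M a := ⟨b, hab, by rw [hnone]; exact hM a b hab⟩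
  obtain ⟨x, hx⟩ := Finite.surjective_of_injective hinj ⟨a, ha'⟩
  obtain ⟨c, hxc, -⟩ := x.2
  have hfx : f x = a := congrArg Subtype.val hx
  have : Ms.mA a = some c := by rw [← hfx, ← hxc]; exact hfM x
  simp [hnone] at this

end EnvyFree

theorem no_feasible_envyFree_of_many_lq_general {A B : Type*} [Fintype A]
    (E : A → B → Prop) (prefA : A → B → B → Prop) (prefB : B → A → A → Prop)
    (lq : B → Prop) (Ms : Matching A B) (hsp : StrictPrefs E prefA prefB)
    (hMs : Ms.RespectsE E) (hstable : Stable E prefA prefB Ms)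
    (hq : Ms.size < Nat.card {b : B // lq b}) :
    ∀ M : Matching A B, M.RespectsE E → Feasible lq M →
      ¬ EnvyFree E prefA prefB M := by
  intro M hM hfeas henvy
  have hsize : M.size ≤ Ms.size :=
    Matching.size_le_size fun _ => isSome_mA_of_envyFree hsp hMs hstable hM henvy
  exact lt_irrefl _ (hq.trans_le ((M.card_lq_le_size hfeas).trans hsize))

/-- if the number of lower-quota resources exceeds the size of a stable
matching, then there is no feasible envy-free matching. -/
theorem no_feasible_envyFree_of_many_lq {A B : Type*} [Fintype A] [Fintype B]
    (E : A → B → Prop) (prefA : A → B → B → Prop) (prefB : B → A → A → Prop)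
    (lq : B → Prop) (Ms : Matching A B) (hsp : StrictPrefs E prefA prefB)
    (hMs : Ms.RespectsE E) (hstable : Stable E prefA prefB Ms)
    (hq : Ms.size < Nat.card {b : B // lq b}) :
    ∀ M : Matching A B, M.RespectsE E → Feasible lq M →
      ¬ EnvyFree E prefA prefB M :=
  no_feasible_envyFree_of_many_lq_general E prefA prefB lq Ms hsp hMs hstable hq
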